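/- Let X be a complex nonzero Banach space and T a bounded linear operator on X. Then the following conditions are equivalent: (1) there exists m ∈ ℕ such that the sequence (‖T^n‖/n^m)_{n≥1} is bounded from above; (2) there exists a sequence b of strictly positive real numbers such that H(b) < +∞, b(n) → +∞, and ‖T^n‖/b(n) → 0 as n → +∞; (3) there exist a sequence s of strictly positive real numbers and p ∈ ℕ such that Δ^p s is concave and not bounded from above, and ‖T^n‖/s(n) → 0 as n → +∞; (4) there exist a nondecreasing sequence s of strictly positive real numbers and q ∈ ℕ with q ≥ 2 such that s(n) → +∞, s(n+1)/s(n) → 1, Δ^q s ∈ ℓ¹, and ‖T^n‖/s(n) → 0 as n → +∞. Moreover, these equivalent conditions imply that the spectral radius of T is at most 1. -/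
import Mathlib


/-- The difference operator on real sequences: `(Δa)(0) = a(0)` and
`(Δa)(n) = a(n) − a(n−1)` for `n ≥ 1`. -/
def dSeq (a : ℕ → ℝ) : ℕ → ℝ := fun n =>
  match n with
  | 0 => a 0
  | n + 1 => a (n + 1) - a n

/-- The index `H(a) ∈ ℕ ∪ {+∞}`: the infimum of the set of `m ∈ ℕ` for which the
sequence `(a(n)/n^m)_{n≥1}` is bounded from above. -/
noncomputable def Hindex (a : ℕ → ℝ) : ℕ∞ :=
  sInf {m : ℕ∞ | ∃ k : ℕ, m = (k : ℕ∞) ∧ ∃ M : ℝ, ∀ n : ℕ, 1 ≤ n → a n / (n : ℝ) ^ k ≤ M}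

open Filter

lemma sum_dSeq (a : ℕ → ℝ) (n : ℕ) : ∑ k ∈ Finset.range (n + 1), dSeq a k = a n := by
  induction n with
  | zero => simp [dSeq]
  | succ n ih => rw [Finset.sum_range_succ, ih]; simp [dSeq]

lemma bound_step {a : ℕ → ℝ} {C : ℝ} (hC : 0 ≤ C) (k : ℕ)
    (h : ∀ n, dSeq a n ≤ C * (n + 1) ^ k) : ∀ n, a n ≤ C * (n + 1) ^ (k + 1) := by
  intro n
  rw [← sum_dSeq a n]
  calc ∑ j ∈ Finset.range (n + 1), dSeq a j
      ≤ ∑ _j ∈ Finset.range (n + 1), C * ((n : ℝ) + 1) ^ k := by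
        apply Finset.sum_le_sum
        intro j hj
        refine (h j).trans ?_
        have hj' : (j : ℝ) + 1 ≤ (n : ℝ) + 1 := by
          have := Finset.mem_range.1 hj
          have : (j : ℝ) ≤ n := by exact_mod_cast Nat.lt_succ_iff.mp this
          linarith
        exact mul_le_mul_of_nonneg_left (pow_le_pow_left₀ (by positivity) hj' k) hC
    _ = C * ((n : ℝ) + 1) ^ (k + 1) := by
        rw [Finset.sum_const, Finset.card_range]
        ring

lemma iter_bound {C : ℝ} (hC : 0 ≤ C) :
    ∀ (p k : ℕ) (a : ℕ → ℝ), (∀ n, dSeq^[p] a n ≤ C * (n + 1) ^ k) →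
      ∀ n, a n ≤ C * (n + 1) ^ (k + p) := by
  intro p
  induction p with
  | zero => intro k a h n; simpa using h n
  | succ p ih =>
    intro k a h n
    have h1 : ∀ n, dSeq (dSeq^[p] a) n ≤ C * (n + 1) ^ k := by
      intro n
      have := h n
      rwa [Function.iterate_succ_apply'] at this
    have h2 := bound_step hC k h1
    have := ih (k + 1) a h2 n
    have e : k + 1 + p = k + (p + 1) := by omega
    rwa [e] at this

lemma dSeq_choose (k : ℕ) :
    dSeq (fun n => ((n + k + 1).choose (k + 1) : ℝ)) = fun n => ((n + k).choose k : ℝ) := by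
  funext n
  cases n with
  | zero => simp [dSeq]
  | succ n =>
    show ((n + 1 + k + 1).choose (k + 1) : ℝ) - ((n + k + 1).choose (k + 1) : ℝ)
      = ((n + 1 + k).choose k : ℝ)
    have e : n + 1 + k + 1 = (n + k + 1) + 1 := by omega
    have e2 : n + 1 + k = n + k + 1 := by omega
    rw [e, e2, Nat.choose_succ_succ (n + k + 1) k]
    push_cast
    ring

lemma iter_dSeq_choose : ∀ (j k : ℕ),
    dSeq^[j] (fun n => ((n + k + j).choose (k + j) : ℝ)) = fun n => ((n + k).choose k : ℝ) := by
  intro j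
  induction j with
  | zero => intro k; simp
  | succ j ih =>
    intro k
    rw [Function.iterate_succ_apply]
    have e : (fun n => ((n + k + (j + 1)).choose (k + (j + 1)) : ℝ))
        = fun n => ((n + (k + j) + 1).choose ((k + j) + 1) : ℝ) := by
      funext n; congr 2; omega
    rw [e, dSeq_choose (k + j)]
    have e2 : (fun n => ((n + (k + j)).choose (k + j) : ℝ))
        = fun n => ((n + k + j).choose (k + j) : ℝ) := by
      funext n; congr 2; omega
    rw [e2, ih k]

lemma dSeq_const_mul (c : ℝ) (a : ℕ → ℝ) :
    dSeq (fun n => c * a n) = fun n => c * dSeq a n := by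
  funext n; cases n <;> simp [dSeq] <;> ring

lemma iter_dSeq_const_mul (c : ℝ) : ∀ (p : ℕ) (a : ℕ → ℝ),
    dSeq^[p] (fun n => c * a n) = fun n => c * dSeq^[p] a n := by
  intro p
  induction p with
  | zero => intro a; simp
  | succ p ih =>
    intro a
    rw [Function.iterate_succ_apply, dSeq_const_mul, ih]
    funext n
    rw [Function.iterate_succ_apply]

lemma nat_le_choose (n : ℕ) : ∀ m : ℕ, n + 1 ≤ (n + 1 + m).choose (1 + m) := by
  intro m
  induction m with
  | zero => simp
  | succ m ih =>
    have e : n + 1 + (m + 1) = (n + 1 + m) + 1 := by omega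
    have e2 : 1 + (m + 1) = (1 + m) + 1 := by omega
    rw [e, e2, Nat.choose_succ_succ]
    calc n + 1 ≤ (n + 1 + m).choose (1 + m) := ih
      _ ≤ _ := Nat.le_add_right _ _

noncomputable def sFun (M : ℝ) (m : ℕ) : ℕ → ℝ :=
  fun n => (M + 1) * ((n + 1 + m).choose (1 + m) : ℝ)

section master
variable (M : ℝ) (m : ℕ) (hM : 0 ≤ M)
include hM

lemma sFun_pos : ∀ n, 0 < sFun M m n := by
  intro n
  have h1 : 0 < (n + 1 + m).choose (1 + m) := Nat.choose_pos (by omega)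
  have : (0 : ℝ) < ((n + 1 + m).choose (1 + m) : ℝ) := by exact_mod_cast h1
  have : (0:ℝ) < M + 1 := by linarith
  unfold sFun; positivity

lemma sFun_mono : Monotone (sFun M m) := by
  intro a b hab
  unfold sFun
  have : (a + 1 + m).choose (1 + m) ≤ (b + 1 + m).choose (1 + m) :=
    Nat.choose_le_choose _ (by omega)
  have h2 : ((a + 1 + m).choose (1 + m) : ℝ) ≤ ((b + 1 + m).choose (1 + m) : ℝ) := by
    exact_mod_cast this
  nlinarith

lemma sFun_lb : ∀ n : ℕ, ((n : ℝ) + 1) ≤ sFun M m n := by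
  intro n
  have h := nat_le_choose n m
  have h2 : ((n : ℝ) + 1) ≤ ((n + 1 + m).choose (1 + m) : ℝ) := by exact_mod_cast h
  have h3 : (0:ℝ) ≤ ((n + 1 + m).choose (1 + m) : ℝ) := by positivity
  unfold sFun; nlinarith

lemma sFun_atTop : Filter.Tendsto (sFun M m) Filter.atTop Filter.atTop := by
  apply Filter.tendsto_atTop_mono (sFun_lb M m hM)
  exact Filter.tendsto_atTop_add_const_right _ 1 tendsto_natCast_atTop_atTop

omit hM in
lemma sFun_iter : dSeq^[m] (sFun M m) = fun n : ℕ => (M + 1) * ((n : ℝ) + 1) := by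
  unfold sFun
  rw [iter_dSeq_const_mul (M + 1) m, iter_dSeq_choose m 1]
  funext n
  simp [Nat.choose_one_right]

lemma sFun_antitone :
    Antitone fun n => dSeq^[m] (sFun M m) (n + 1) - dSeq^[m] (sFun M m) n := by
  have : (fun n => dSeq^[m] (sFun M m) (n + 1) - dSeq^[m] (sFun M m) n)
      = fun _ => (M + 1) := by
    funext n; rw [sFun_iter M m]; push_cast; ring
  rw [this]
  exact antitone_const

lemma sFun_unbdd : ¬∃ B : ℝ, ∀ n, dSeq^[m] (sFun M m) n ≤ B := by
  rintro ⟨B, hB⟩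
  obtain ⟨n, hn⟩ := exists_nat_gt (B / (M + 1))
  have h1 := hB n
  rw [sFun_iter M m] at h1
  have hpos : (0:ℝ) < M + 1 := by linarith
  have h2 : B < (n : ℝ) * (M + 1) := (div_lt_iff₀ hpos).1 hn
  simp only at h1
  nlinarith [Nat.cast_nonneg (α := ℝ) n]

lemma sFun_pow_lb :
    ∀ n : ℕ, ((n : ℝ) + 1) ^ (1 + m) / ((1 + m).factorial : ℝ) ≤ sFun M m n := by
  intro n
  have h := Nat.pow_le_choose (α := ℝ) (1 + m) (n + 1 + m)
  have e : n + 1 + m + 1 - (1 + m) = n + 1 := by omega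
  rw [e] at h
  push_cast at h
  have h3 : (0:ℝ) ≤ ((n + 1 + m).choose (1 + m) : ℝ) := by positivity
  have : ((n + 1 + m).choose (1 + m) : ℝ) ≤ sFun M m n := by
    unfold sFun; nlinarith
  linarith [h]

lemma sFun_ub :
    ∀ n : ℕ, 1 ≤ n → sFun M m n ≤ (M + 1) * ((m : ℝ) + 2) ^ (1 + m) * n ^ (1 + m) := by
  intro n hn
  have h := Nat.choose_le_pow (n + 1 + m) (1 + m)
  have h2 : ((n + 1 + m).choose (1 + m) : ℝ) ≤ ((n + 1 + m : ℕ) : ℝ) ^ (1 + m) := by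
    exact_mod_cast h
  have hb : ((n + 1 + m : ℕ) : ℝ) ≤ ((m : ℝ) + 2) * n := by
    push_cast
    have : (1 : ℝ) ≤ (n : ℝ) := by exact_mod_cast hn
    nlinarith
  have hb2 : ((n + 1 + m : ℕ) : ℝ) ^ (1 + m) ≤ (((m : ℝ) + 2) * n) ^ (1 + m) :=
    pow_le_pow_left₀ (by positivity) hb _
  unfold sFun
  rw [mul_pow] at hb2
  nlinarith [pow_nonneg (Nat.cast_nonneg (α := ℝ) n) (1 + m),
    pow_nonneg (by positivity : (0:ℝ) ≤ (m : ℝ) + 2) (1 + m)]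

lemma sFun_ratio :
    Filter.Tendsto (fun n => sFun M m (n + 1) / sFun M m n) Filter.atTop (nhds 1) := by
  have key : ∀ n : ℕ, sFun M m (n + 1) / sFun M m n = ((n : ℝ) + m + 2) / ((n : ℝ) + 1) := by
    intro n
    have hid := Nat.choose_mul_succ_eq (n + 1 + m) (1 + m)
    have e1 : n + 1 + m + 1 - (1 + m) = n + 1 := by omega
    rw [e1] at hid
    have e2 : n + 1 + 1 + m = n + 1 + m + 1 := by omega
    have hc : (0:ℝ) < ((n + 1 + m).choose (1 + m) : ℝ) := by
      exact_mod_cast Nat.choose_pos (show 1 + m ≤ n + 1 + m by omega)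
    have hc2 : (0:ℝ) < ((n + 1 + m + 1).choose (1 + m) : ℝ) := by
      exact_mod_cast Nat.choose_pos (show 1 + m ≤ n + 1 + m + 1 by omega)
    have hidR : ((n + 1 + m).choose (1 + m) : ℝ) * ((n : ℝ) + m + 2)
        = ((n + 1 + m + 1).choose (1 + m) : ℝ) * ((n : ℝ) + 1) := by
      have := congrArg (fun x : ℕ => (x : ℝ)) hid
      push_cast at this
      linarith
    unfold sFun
    rw [e2]
    rw [div_eq_div_iff (by positivity) (by positivity)]
    nlinarith [hidR]
  have heq : (fun n => sFun M m (n + 1) / sFun M m n)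
      = fun n : ℕ => 1 + ((m : ℝ) + 1) / ((n : ℝ) + 1) := by
    funext n
    rw [key n]
    have : (0:ℝ) < (n : ℝ) + 1 := by positivity
    field_simp
    ring
  rw [heq]
  have hatop : Filter.Tendsto (fun n : ℕ => (n : ℝ) + 1) Filter.atTop Filter.atTop :=
    Filter.tendsto_atTop_add_const_right _ 1 tendsto_natCast_atTop_atTop
  have h0 : Filter.Tendsto (fun n : ℕ => ((m : ℝ) + 1) / ((n : ℝ) + 1))
      Filter.atTop (nhds 0) := Filter.Tendsto.div_atTop tendsto_const_nhds hatop
  have := h0.const_add (1 : ℝ)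
  simpa using this

omit hM in
lemma sFun_summable : Summable fun n => |dSeq^[m + 2] (sFun M m) n| := by
  apply summable_of_ne_finset_zero (s := {0})
  intro n hn
  have hn0 : n ≠ 0 := by simpa using hn
  have e : m + 2 = 2 + m := by omega
  have h2 : dSeq^[m + 2] (sFun M m) = dSeq^[2] (dSeq^[m] (sFun M m)) := by
    rw [e, Function.iterate_add_apply]
  rw [h2, sFun_iter]
  obtain ⟨k, rfl⟩ : ∃ k, n = k + 1 := ⟨n - 1, by omega⟩
  show |dSeq (dSeq (fun n : ℕ => (M + 1) * ((n : ℝ) + 1))) (k + 1)| = 0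
  cases k with
  | zero => simp [dSeq]; ring
  | succ k => simp [dSeq]; ring

lemma sFun_tendsto_div {u : ℕ → ℝ} (hu : ∀ n, 0 ≤ u n)
    (hub : ∀ n : ℕ, 1 ≤ n → u n ≤ M * (n : ℝ) ^ m) :
    Filter.Tendsto (fun n => u n / sFun M m n) Filter.atTop (nhds 0) := by
  have hc : Filter.Tendsto (fun n : ℕ => M * ((1 + m).factorial : ℝ) / ((n : ℝ) + 1))
      Filter.atTop (nhds 0) :=
    Filter.Tendsto.div_atTop tendsto_const_nhds
      (Filter.tendsto_atTop_add_const_right _ 1 tendsto_natCast_atTop_atTop)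
  apply squeeze_zero' (g := fun n : ℕ => M * ((1 + m).factorial : ℝ) / ((n : ℝ) + 1)) ?_ ?_ hc
  · exact Filter.Eventually.of_forall fun n =>
      div_nonneg (hu n) (le_of_lt (sFun_pos M m hM n))
  · filter_upwards [Filter.eventually_ge_atTop 1] with n hn
    have hspos := sFun_pos M m hM n
    have hfac : (0:ℝ) < ((1 + m).factorial : ℝ) := by exact_mod_cast (1 + m).factorial_pos
    have hlb := sFun_pow_lb M m hM n
    have hnum := hub n hn
    have hn1 : (1:ℝ) ≤ (n : ℝ) := by exact_mod_cast hn
    have hlbpos : (0:ℝ) < ((n : ℝ) + 1) ^ (1 + m) / ((1 + m).factorial : ℝ) := by positivity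
    calc u n / sFun M m n
        ≤ (M * (n : ℝ) ^ m) / (((n : ℝ) + 1) ^ (1 + m) / ((1 + m).factorial : ℝ)) := by
          apply div_le_div₀ (by positivity) hnum hlbpos hlb
      _ ≤ M * ((1 + m).factorial : ℝ) / ((n : ℝ) + 1) := by
          rw [div_div_eq_mul_div, div_le_div_iff₀ (by positivity) (by positivity)]
          have hpow : (n : ℝ) ^ m ≤ ((n : ℝ) + 1) ^ m :=
            pow_le_pow_left₀ (by positivity) (by linarith) m
          have e : ((n : ℝ) + 1) ^ (1 + m) = ((n : ℝ) + 1) * ((n : ℝ) + 1) ^ m := by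
            rw [pow_add, pow_one]
          rw [e]
          nlinarith [mul_le_mul_of_nonneg_left hpow
            (by positivity : (0:ℝ) ≤ M * ((1 + m).factorial : ℝ) * ((n : ℝ) + 1))]

lemma sFun_Hindex : Hindex (sFun M m) ≠ ⊤ := by
  have hmem : ((1 + m : ℕ) : ℕ∞) ∈
      {x : ℕ∞ | ∃ k : ℕ, x = (k : ℕ∞) ∧
        ∃ B : ℝ, ∀ n : ℕ, 1 ≤ n → sFun M m n / (n : ℝ) ^ k ≤ B} := by
    refine ⟨1 + m, rfl, (M + 1) * ((m : ℝ) + 2) ^ (1 + m), fun n hn => ?_⟩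
    have hub := sFun_ub M m hM n hn
    have hp : (0:ℝ) < (n : ℝ) ^ (1 + m) := by
      have : (0:ℝ) < (n:ℝ) := by exact_mod_cast hn
      positivity
    rw [div_le_iff₀ hp]
    linarith
  have hle : Hindex (sFun M m) ≤ ((1 + m : ℕ) : ℕ∞) := sInf_le hmem
  exact ne_top_of_le_ne_top (WithTop.coe_ne_top) hle

end master

lemma poly_of_tendsto {u s : ℕ → ℝ} (hu : ∀ n, 0 ≤ u n) (hs : ∀ n, 0 < s n)
    {C : ℝ} (hC : 0 ≤ C) (k : ℕ) (hsb : ∀ n : ℕ, s n ≤ C * ((n : ℝ) + 1) ^ k)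
    (ht : Tendsto (fun n => u n / s n) atTop (nhds 0)) :
    ∃ M : ℝ, ∀ n : ℕ, 1 ≤ n → u n / (n : ℝ) ^ k ≤ M := by
  obtain ⟨N, hN⟩ := eventually_atTop.1 (ht.eventually_lt_const one_pos)
  refine ⟨max (C * 2 ^ k) (∑ i ∈ Finset.range N, u i), fun n hn => ?_⟩
  have h1n : (1 : ℝ) ≤ (n : ℝ) := by exact_mod_cast hn
  have hnk : (0 : ℝ) < (n : ℝ) ^ k := by positivity
  by_cases hcase : N ≤ n
  · have hun : u n ≤ s n := le_of_lt ((div_lt_one (hs n)).1 (hN n hcase))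
    have h2 : ((n : ℝ) + 1) ^ k ≤ (2 * n) ^ k :=
      pow_le_pow_left₀ (by positivity) (by linarith) k
    have h3 : s n ≤ C * 2 ^ k * (n : ℝ) ^ k := by
      have := hsb n
      rw [mul_pow] at h2
      nlinarith
    refine le_trans ?_ (le_max_left _ _)
    rw [div_le_iff₀ hnk]
    linarith
  · have hmem : n ∈ Finset.range N := Finset.mem_range.2 (by omega)
    have h4 : u n ≤ ∑ i ∈ Finset.range N, u i :=
      Finset.single_le_sum (fun i _ => hu i) hmem
    refine le_trans ?_ (le_max_right _ _)
    have h5 : u n / (n : ℝ) ^ k ≤ u n :=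
      div_le_self (hu n) (one_le_pow₀ h1n)
    linarith

lemma concave_linear_bound {a : ℕ → ℝ} (h : Antitone fun n => a (n + 1) - a n) :
    ∀ n : ℕ, a n ≤ (|a 0| + |a 1 - a 0|) * ((n : ℝ) + 1) ^ 1 := by
  have step : ∀ n : ℕ, a n ≤ a 0 + n * (a 1 - a 0) := by
    intro n
    induction n with
    | zero => simp
    | succ n ih =>
      have hd : a (n + 1) - a n ≤ a 1 - a 0 := by
        have := h (Nat.zero_le n)
        simpa using this
      push_cast
      push_cast at ih
      linarith
  intro n
  have h1 := step n
  have h2 : a 0 ≤ |a 0| := le_abs_self _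
  have h3 : a 1 - a 0 ≤ |a 1 - a 0| := le_abs_self _
  have h4 : (0:ℝ) ≤ |a 1 - a 0| := abs_nonneg _
  have h5 : (0:ℝ) ≤ |a 0| := abs_nonneg _
  have h6 : (0:ℝ) ≤ (n : ℝ) := Nat.cast_nonneg n
  have h7 : (n:ℝ) * (a 1 - a 0) ≤ (n:ℝ) * |a 1 - a 0| := by nlinarith
  rw [pow_one]
  nlinarith

lemma summable_const_bound {a : ℕ → ℝ} (hsum : Summable fun n => |dSeq a n|) :
    ∀ n : ℕ, a n ≤ (∑' n, |dSeq a n|) * ((n : ℝ) + 1) ^ 0 := by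
  intro n
  rw [pow_zero, mul_one, ← sum_dSeq a n]
  calc ∑ k ∈ Finset.range (n + 1), dSeq a k
      ≤ ∑ k ∈ Finset.range (n + 1), |dSeq a k| :=
        Finset.sum_le_sum fun k _ => le_abs_self _
    _ ≤ ∑' k, |dSeq a k| := Summable.sum_le_tsum _ (fun k _ => abs_nonneg _) hsum

/-- Theorem 6.1: for a bounded linear operator `T` on a complex nonzero Banach space `X`,
the conditions (1) `(‖T^n‖/n^m)_{n≥1}` is bounded above for some `m ∈ ℕ`; (2) there is a
sequence `b > 0` with `H(b) < +∞`, `b(n) → +∞` and `‖T^n‖/b(n) → 0`; (3) there are a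
sequence `s > 0` and `p ∈ ℕ` with `Δ^p s` concave and unbounded from above and
`‖T^n‖/s(n) → 0`; (4) there are a nondecreasing sequence `s > 0` and `q ≥ 2` with
`s(n) → +∞`, `s(n+1)/s(n) → 1`, `Δ^q s ∈ ℓ¹` and `‖T^n‖/s(n) → 0`, are all equivalent,
and they imply that the spectral radius of `T` is at most `1`. -/
theorem stmt15 {X : Type*} [NormedAddCommGroup X] [NormedSpace ℂ X] [CompleteSpace X]
    [Nontrivial X] (T : X →L[ℂ] X) :
    ((∃ m : ℕ, ∃ M : ℝ, ∀ n : ℕ, 1 ≤ n → ‖T ^ n‖ / (n : ℝ) ^ m ≤ M) ↔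
      (∃ b : ℕ → ℝ, (∀ n, 0 < b n) ∧ Hindex b ≠ ⊤ ∧
        Filter.Tendsto b Filter.atTop Filter.atTop ∧
        Filter.Tendsto (fun n => ‖T ^ n‖ / b n) Filter.atTop (nhds 0))) ∧
    ((∃ b : ℕ → ℝ, (∀ n, 0 < b n) ∧ Hindex b ≠ ⊤ ∧
        Filter.Tendsto b Filter.atTop Filter.atTop ∧
        Filter.Tendsto (fun n => ‖T ^ n‖ / b n) Filter.atTop (nhds 0)) ↔
      (∃ s : ℕ → ℝ, ∃ p : ℕ, (∀ n, 0 < s n) ∧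
        (Antitone fun n => dSeq^[p] s (n + 1) - dSeq^[p] s n) ∧
        (¬∃ M : ℝ, ∀ n, dSeq^[p] s n ≤ M) ∧
        Filter.Tendsto (fun n => ‖T ^ n‖ / s n) Filter.atTop (nhds 0))) ∧
    ((∃ s : ℕ → ℝ, ∃ p : ℕ, (∀ n, 0 < s n) ∧
        (Antitone fun n => dSeq^[p] s (n + 1) - dSeq^[p] s n) ∧
        (¬∃ M : ℝ, ∀ n, dSeq^[p] s n ≤ M) ∧
        Filter.Tendsto (fun n => ‖T ^ n‖ / s n) Filter.atTop (nhds 0)) ↔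
      (∃ s : ℕ → ℝ, ∃ q : ℕ, 2 ≤ q ∧ Monotone s ∧ (∀ n, 0 < s n) ∧
        Filter.Tendsto s Filter.atTop Filter.atTop ∧
        Filter.Tendsto (fun n => s (n + 1) / s n) Filter.atTop (nhds 1) ∧
        Summable (fun n => |dSeq^[q] s n|) ∧
        Filter.Tendsto (fun n => ‖T ^ n‖ / s n) Filter.atTop (nhds 0))) ∧
    ((∃ m : ℕ, ∃ M : ℝ, ∀ n : ℕ, 1 ≤ n → ‖T ^ n‖ / (n : ℝ) ^ m ≤ M) →
      spectralRadius ℂ T ≤ 1) := by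
  set u : ℕ → ℝ := fun n => ‖T ^ n‖ with hu_def
  have hu : ∀ n, 0 ≤ u n := fun n => norm_nonneg _
  -- condition (1) implies an upper bound hub usable for sFun
  have hub_of : ∀ {m : ℕ} {M : ℝ}, (∀ n : ℕ, 1 ≤ n → u n / (n : ℝ) ^ m ≤ M) →
      (0 ≤ M ∧ ∀ n : ℕ, 1 ≤ n → u n ≤ M * (n : ℝ) ^ m) := by
    intro m M hM
    have hMnn : 0 ≤ M := by
      have := hM 1 le_rfl
      simp at this
      exact le_trans (norm_nonneg _) this
    refine ⟨hMnn, fun n hn => ?_⟩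
    have hp : (0:ℝ) < (n : ℝ) ^ m := by
      have : (0:ℝ) < (n:ℝ) := by exact_mod_cast hn
      positivity
    have := hM n hn
    rw [div_le_iff₀ hp] at this
    linarith
  -- direction (1) → (2)
  have d12 : (∃ m : ℕ, ∃ M : ℝ, ∀ n : ℕ, 1 ≤ n → u n / (n : ℝ) ^ m ≤ M) →
      (∃ b : ℕ → ℝ, (∀ n, 0 < b n) ∧ Hindex b ≠ ⊤ ∧
        Filter.Tendsto b Filter.atTop Filter.atTop ∧
        Filter.Tendsto (fun n => u n / b n) Filter.atTop (nhds 0)) := by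
    rintro ⟨m, M, hM⟩
    obtain ⟨hMnn, hub⟩ := hub_of hM
    exact ⟨sFun M m, sFun_pos M m hMnn, sFun_Hindex M m hMnn, sFun_atTop M m hMnn,
      sFun_tendsto_div M m hMnn hu hub⟩
  -- direction (2) → (1)
  have d21 : (∃ b : ℕ → ℝ, (∀ n, 0 < b n) ∧ Hindex b ≠ ⊤ ∧
        Filter.Tendsto b Filter.atTop Filter.atTop ∧
        Filter.Tendsto (fun n => u n / b n) Filter.atTop (nhds 0)) →
      (∃ m : ℕ, ∃ M : ℝ, ∀ n : ℕ, 1 ≤ n → u n / (n : ℝ) ^ m ≤ M) := by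
    rintro ⟨b, hbpos, hH, _, hbt⟩
    have hne : {x : ℕ∞ | ∃ k : ℕ, x = (k : ℕ∞) ∧
        ∃ B : ℝ, ∀ n : ℕ, 1 ≤ n → b n / (n : ℝ) ^ k ≤ B}.Nonempty := by
      by_contra hc
      rw [Set.not_nonempty_iff_eq_empty] at hc
      rw [Hindex, hc, sInf_empty] at hH
      exact hH rfl
    obtain ⟨x, k, rfl, B, hB⟩ := hne
    -- b n ≤ C * (n+1)^k for all n
    set C : ℝ := max B (b 0) with hC_def
    have hCnn : 0 ≤ C := by
      have := hbpos 0
      have : b 0 ≤ C := le_max_right _ _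
      have h0 := hbpos 0
      nlinarith [le_max_right B (b 0)]
    have hsb : ∀ n : ℕ, b n ≤ C * ((n : ℝ) + 1) ^ k := by
      intro n
      rcases Nat.eq_zero_or_pos n with rfl | hn
      · have : (1:ℝ) ≤ ((0 : ℝ) + 1) ^ k := by norm_num
        have hb0 : b 0 ≤ C := le_max_right _ _
        push_cast
        nlinarith
      · have hn1 : (1:ℝ) ≤ (n : ℝ) := by exact_mod_cast hn
        have hp : (0:ℝ) < (n : ℝ) ^ k := by positivity
        have h1 := hB n hn
        rw [div_le_iff₀ hp] at h1
        have hBC : B ≤ C := le_max_left _ _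
        have hpow : (n : ℝ) ^ k ≤ ((n : ℝ) + 1) ^ k :=
          pow_le_pow_left₀ (by positivity) (by linarith) k
        have hBnn : 0 ≤ B := by
          have := hB n hn
          have hbn := hbpos n
          nlinarith [hB n hn, div_pos hbn hp]
        nlinarith
    exact ⟨k, poly_of_tendsto hu hbpos hCnn k hsb hbt⟩
  -- direction (1) → (3)
  have d13 : (∃ m : ℕ, ∃ M : ℝ, ∀ n : ℕ, 1 ≤ n → u n / (n : ℝ) ^ m ≤ M) →
      (∃ s : ℕ → ℝ, ∃ p : ℕ, (∀ n, 0 < s n) ∧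
        (Antitone fun n => dSeq^[p] s (n + 1) - dSeq^[p] s n) ∧
        (¬∃ M : ℝ, ∀ n, dSeq^[p] s n ≤ M) ∧
        Filter.Tendsto (fun n => u n / s n) Filter.atTop (nhds 0)) := by
    rintro ⟨m, M, hM⟩
    obtain ⟨hMnn, hub⟩ := hub_of hM
    exact ⟨sFun M m, m, sFun_pos M m hMnn, sFun_antitone M m hMnn, sFun_unbdd M m hMnn,
      sFun_tendsto_div M m hMnn hu hub⟩
  -- direction (3) → (1)
  have d31 : (∃ s : ℕ → ℝ, ∃ p : ℕ, (∀ n, 0 < s n) ∧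
        (Antitone fun n => dSeq^[p] s (n + 1) - dSeq^[p] s n) ∧
        (¬∃ M : ℝ, ∀ n, dSeq^[p] s n ≤ M) ∧
        Filter.Tendsto (fun n => u n / s n) Filter.atTop (nhds 0)) →
      (∃ m : ℕ, ∃ M : ℝ, ∀ n : ℕ, 1 ≤ n → u n / (n : ℝ) ^ m ≤ M) := by
    rintro ⟨s, p, hpos, hconc, _, ht⟩
    set a : ℕ → ℝ := dSeq^[p] s with ha_def
    set C : ℝ := |a 0| + |a 1 - a 0| with hC_def
    have hCnn : 0 ≤ C := by positivity
    have h1 : ∀ n, a n ≤ C * ((n : ℝ) + 1) ^ 1 := concave_linear_bound hconc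
    have h2 : ∀ n : ℕ, s n ≤ C * ((n : ℝ) + 1) ^ (1 + p) := iter_bound hCnn p 1 s h1
    exact ⟨1 + p, poly_of_tendsto hu hpos hCnn (1 + p) h2 ht⟩
  -- direction (1) → (4)
  have d14 : (∃ m : ℕ, ∃ M : ℝ, ∀ n : ℕ, 1 ≤ n → u n / (n : ℝ) ^ m ≤ M) →
      (∃ s : ℕ → ℝ, ∃ q : ℕ, 2 ≤ q ∧ Monotone s ∧ (∀ n, 0 < s n) ∧
        Filter.Tendsto s Filter.atTop Filter.atTop ∧
        Filter.Tendsto (fun n => s (n + 1) / s n) Filter.atTop (nhds 1) ∧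
        Summable (fun n => |dSeq^[q] s n|) ∧
        Filter.Tendsto (fun n => u n / s n) Filter.atTop (nhds 0)) := by
    rintro ⟨m, M, hM⟩
    obtain ⟨hMnn, hub⟩ := hub_of hM
    exact ⟨sFun M m, m + 2, by omega, sFun_mono M m hMnn, sFun_pos M m hMnn,
      sFun_atTop M m hMnn, sFun_ratio M m hMnn, sFun_summable M m,
      sFun_tendsto_div M m hMnn hu hub⟩
  -- direction (4) → (1)
  have d41 : (∃ s : ℕ → ℝ, ∃ q : ℕ, 2 ≤ q ∧ Monotone s ∧ (∀ n, 0 < s n) ∧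
        Filter.Tendsto s Filter.atTop Filter.atTop ∧
        Filter.Tendsto (fun n => s (n + 1) / s n) Filter.atTop (nhds 1) ∧
        Summable (fun n => |dSeq^[q] s n|) ∧
        Filter.Tendsto (fun n => u n / s n) Filter.atTop (nhds 0)) →
      (∃ m : ℕ, ∃ M : ℝ, ∀ n : ℕ, 1 ≤ n → u n / (n : ℝ) ^ m ≤ M) := by
    rintro ⟨s, q, hq, _, hpos, _, _, hsum, ht⟩
    obtain ⟨q', rfl⟩ : ∃ q', q = q' + 1 := ⟨q - 1, by omega⟩
    have hsum' : Summable fun n => |dSeq (dSeq^[q'] s) n| := by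
      have e : (fun n => |dSeq (dSeq^[q'] s) n|) = fun n => |dSeq^[q' + 1] s n| := by
        funext n
        rw [Function.iterate_succ_apply']
      rw [e]
      exact hsum
    set C : ℝ := ∑' n, |dSeq (dSeq^[q'] s) n| with hC_def
    have hCnn : 0 ≤ C := tsum_nonneg fun n => abs_nonneg _
    have h1 : ∀ n, dSeq^[q'] s n ≤ C * ((n : ℝ) + 1) ^ 0 := summable_const_bound hsum'
    have h2 : ∀ n : ℕ, s n ≤ C * ((n : ℝ) + 1) ^ (0 + q') := iter_bound hCnn q' 0 s h1
    exact ⟨0 + q', poly_of_tendsto hu hpos hCnn (0 + q') h2 ht⟩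
  -- spectral radius
  have dspec : (∃ m : ℕ, ∃ M : ℝ, ∀ n : ℕ, 1 ≤ n → u n / (n : ℝ) ^ m ≤ M) →
      spectralRadius ℂ T ≤ 1 := by
    rintro ⟨m, M, hM⟩
    by_contra hlt
    rw [not_le] at hlt
    obtain ⟨t, ht1, htr⟩ := ENNReal.lt_iff_exists_nnreal_btwn.1 hlt
    have ht1' : (1 : ℝ) < (t : ℝ) := by exact_mod_cast ht1
    have hgel := spectrum.pow_nnnorm_pow_one_div_tendsto_nhds_spectralRadius T
    have hev : ∀ᶠ n : ℕ in atTop, (t : ENNReal) < (‖T ^ n‖₊ : ENNReal) ^ (1 / (n : ℝ)) :=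
      hgel.eventually (eventually_gt_nhds htr)
    have hpoly := tendsto_pow_const_div_const_pow_of_one_lt m ht1'
    obtain ⟨hMnn, hub⟩ := hub_of hM
    have hev3 := hpoly.eventually_lt_const (show (0:ℝ) < 1 / (M + 1) by positivity)
    have hfalse : ∀ᶠ n : ℕ in atTop, False := by
      filter_upwards [hev, hev3, eventually_ge_atTop 1] with n h1 h3 hn1
      have hn0 : (n : ℝ) ≠ 0 := by positivity
      have h1' : ((t : ENNReal) ^ (n : ℝ)) < ((‖T ^ n‖₊ : ENNReal) ^ (1 / (n : ℝ))) ^ (n : ℝ) := by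
        apply ENNReal.rpow_lt_rpow h1 (by positivity)
      rw [← ENNReal.rpow_mul, one_div, inv_mul_cancel₀ hn0, ENNReal.rpow_one,
        ENNReal.rpow_natCast, ← ENNReal.coe_pow, ENNReal.coe_lt_coe] at h1'
      have h1'' : (t : ℝ) ^ n < ‖T ^ n‖ := by
        have := (NNReal.coe_lt_coe).2 h1'
        rw [NNReal.coe_pow] at this
        simpa [coe_nnnorm] using this
      have hMn : ‖T ^ n‖ ≤ M * (n : ℝ) ^ m := hub n hn1
      have htp : (0:ℝ) < (t : ℝ) ^ n := by positivity
      have h3' : (n : ℝ) ^ m * (M + 1) < (t : ℝ) ^ n := by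
        rw [div_lt_div_iff₀ htp (by positivity)] at h3
        nlinarith
      have hnp : (0:ℝ) < (n : ℝ) ^ m := by
        have : (0:ℝ) < (n:ℝ) := by exact_mod_cast hn1
        positivity
      nlinarith
    obtain ⟨_, hfalse'⟩ := hfalse.exists
    exact hfalse'
  exact ⟨⟨d12, d21⟩, ⟨fun h2 => d13 (d21 h2), fun h3 => d12 (d31 h3)⟩,
    ⟨fun h3 => d14 (d31 h3), fun h4 => d13 (d41 h4)⟩, dspec⟩
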